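/- Let a, b, z ∈ ℂ with |z| < 1 and b not a nonpositive integer. Then F(a,b,b;z) = (1 − z)^{−a}, i.e. ∑_{n=0}^∞ (a)_n (b)_n / ((b)_n · n!) · z^n = (1 − z)^{−a}, where (1−z)^{−a} denotes the principal complex power exp(−a · Log(1−z)). -/

import Mathlib

/-!
Since `b` is not a nonpositive integer, `(b)_n ≠ 0` cancels, and what remains is the binomial
series `∑ (a)_n / n! zⁿ`, whose coefficients are the multiset coefficients
`(a + n - 1 choose n)` of the power series of `1 / (1 - z)^a` on the unit disc.
-/

open scoped Nat

/-- The `n`-th term of the Gaussian hypergeometric series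
`F(a,b,c;z) = ∑ (a)_n (b)_n / ((c)_n · n!) · z^n`. -/
noncomputable def hypTerm (a b c z : ℂ) (n : ℕ) : ℂ :=
  (ascPochhammer ℂ n).eval a * (ascPochhammer ℂ n).eval b
    / ((ascPochhammer ℂ n).eval c * (n ! : ℂ)) * z ^ n

theorem Ring.multichoose_eq_ascPochhammer_eval_div {K : Type*} [Field K] [CharZero K]
    (a : K) (n : ℕ) : Ring.multichoose a n = (ascPochhammer K n).eval a / n ! := by
  rw [eq_div_iff (by exact_mod_cast n.factorial_ne_zero), mul_comm, ← nsmul_eq_mul,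
    Ring.factorial_nsmul_multichoose_eq_ascPochhammer, Polynomial.ascPochhammer_smeval_eq_eval]

theorem Complex.hasSum_ascPochhammer_div_factorial_mul_pow {a z : ℂ} (hz : ‖z‖ < 1) :
    HasSum (fun n ↦ (ascPochhammer ℂ n).eval a / n ! * z ^ n) ((1 - z) ^ (-a)) := by
  have h := (one_div_one_sub_cpow_hasFPowerSeriesOnBall_zero a).hasSum
    (y := z) (by simpa [enorm_eq_nnnorm, ← NNReal.coe_lt_one] using hz)
  simpa [FormalMultilinearSeries.ofScalars_apply_eq, ← Ring.multichoose_eq,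
    Ring.multichoose_eq_ascPochhammer_eval_div, Complex.cpow_neg, mul_comm] using h

theorem ascPochhammer_eval_ne_zero {K : Type*} [CommRing K] [IsDomain K] {b : K}
    (hb : ∀ m : ℤ, m ≤ 0 → b ≠ m) (n : ℕ) : (ascPochhammer K n).eval b ≠ 0 := by
  rw [Ne, ascPochhammer_eval_eq_zero_iff]
  rintro ⟨k, -, hk⟩
  exact hb (-k) (by omega) (by push_cast; rw [hk, neg_neg])

theorem hypTerm_self (a b z : ℂ) (n : ℕ) (hb : (ascPochhammer ℂ n).eval b ≠ 0) :
    hypTerm a b b z n = (ascPochhammer ℂ n).eval a / n ! * z ^ n := by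
  rw [hypTerm, mul_comm ((ascPochhammer ℂ n).eval a), mul_div_mul_left _ _ hb]

/-- `F(a,b,b;z) = (1 − z)^{−a}` for `|z| < 1` and `b` not a nonpositive integer,
with the principal complex power. -/
theorem hypergeometric_self_eq_one_sub_cpow (a b z : ℂ) (hz : ‖z‖ < 1)
    (hb : ∀ m : ℤ, m ≤ 0 → b ≠ (m : ℂ)) :
    HasSum (fun n : ℕ => hypTerm a b b z n) ((1 - z) ^ (-a)) := by
  simpa only [hypTerm_self a b z _ (ascPochhammer_eval_ne_zero hb _)] using
    Complex.hasSum_ascPochhammer_div_factorial_mul_pow (a := a) hz
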